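/- arXiv:2501.12142 — 4 statements merged into one kernel-verified Lean document; each statement's English description precedes it below -/
import Mathlib

section
/- Define Δ : (ℤ → ℝ) → (ℤ → ℝ) by Δ(u)_i = Σ_{k∈ℤ} 2^{−|k|}(u_i − u_{i+k})^3. Then for any ρ ∈ ℝ and R > 0, Δ is Lipschitz continuous on the set {u : ℤ → ℝ | sup_i |u_i − iρ| ≤ R} with respect to the sup-metric, with Lipschitz constant Σ_{k∈ℤ} 6(|k||ρ| + 2R)^2 2^{−|k|}. -/
/-- The long-range cubic interaction operator. -/
noncomputable def longRangeDelta (u : ℤ → ℝ) (i : ℤ) : ℝ :=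
  ∑' k : ℤ, (2 : ℝ) ^ (-|k| : ℤ) * (u i - u (i + k)) ^ 3

/-!
Near the linear configuration `i ↦ iρ` the increments satisfy `|u_i - u_{i+k}| ≤ X_k`, where
`X_k = |k||ρ| + 2R`, and on `[-X_k, X_k]` the cube is `3X_k²`-Lipschitz. Perturbing `u` by at
most `C` moves each increment by at most `2C`, hence the `k`-th term by at most
`6X_k² 2^{-|k|} C`; these bounds are summable because `X_k` grows only linearly in `|k|`.
-/

lemma summable_natCast_mul_add_pow_mul_geometric (m : ℕ) (a b : ℝ) {r : ℝ} (hr : ‖r‖ < 1) :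
    Summable fun n : ℕ => ((n : ℝ) * a + b) ^ m * r ^ n := by
  have expand : ∀ n : ℕ, ((n : ℝ) * a + b) ^ m * r ^ n =
      ∑ j ∈ Finset.range (m + 1), (n : ℝ) ^ j * r ^ n * (a ^ j * b ^ (m - j) * m.choose j) := by
    intro n
    rw [add_pow, Finset.sum_mul]
    exact Finset.sum_congr rfl fun j _ => by ring
  simp_rw [expand]
  exact summable_sum fun j _ => (summable_pow_mul_geometric_of_norm_lt_one j hr).mul_right _

lemma summable_abs_mul_add_pow_mul_zpow_neg_abs (m : ℕ) (a b : ℝ) {r : ℝ} (hr : 1 < r) :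
    Summable fun k : ℤ => ((|k| : ℝ) * a + b) ^ m * r ^ (-|k|) := by
  have hr' : ‖r⁻¹‖ < 1 := by
    rw [norm_inv, Real.norm_of_nonneg (by linarith)]
    exact inv_lt_one_of_one_lt₀ hr
  have hnat := summable_natCast_mul_add_pow_mul_geometric m a b hr'
  apply Summable.of_nat_of_neg <;> refine hnat.congr fun n => ?_ <;> simp [inv_pow]

lemma abs_pow_three_sub_pow_three_le {a b X : ℝ} (ha : |a| ≤ X) (hb : |b| ≤ X) :
    |a ^ 3 - b ^ 3| ≤ 3 * X ^ 2 * |a - b| := by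
  calc |a ^ 3 - b ^ 3| ≤ |a - b| * 3 * max |a| |b| ^ 2 := by
        exact_mod_cast abs_pow_sub_pow_le a b 3
    _ ≤ |a - b| * 3 * X ^ 2 := by gcongr; exact max_le ha hb
    _ = 3 * X ^ 2 * |a - b| := by ring

section NearLinear

variable {ρ R : ℝ} {v : ℤ → ℝ} (hv : ∀ j : ℤ, |v j - j * ρ| ≤ R)
include hv

lemma abs_sub_apply_add_le (i k : ℤ) : |v i - v (i + k)| ≤ |(k : ℝ)| * |ρ| + 2 * R := by
  have decomp : v i - v (i + k) = (v i - i * ρ) - (v (i + k) - ↑(i + k) * ρ) + (-k) * ρ := by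
    push_cast; ring
  calc |v i - v (i + k)|
      ≤ |v i - i * ρ| + |v (i + k) - ↑(i + k) * ρ| + |(-k : ℝ) * ρ| := by
        rw [decomp]; exact (abs_add_le _ _).trans (add_le_add_left (abs_sub _ _) _)
    _ ≤ R + R + |(k : ℝ)| * |ρ| := by
        rw [abs_mul, abs_neg]; gcongr <;> [exact hv i; exact hv (i + k)]
    _ = |(k : ℝ)| * |ρ| + 2 * R := by ring

lemma summable_longRangeDelta (i : ℤ) :
    Summable fun k : ℤ => (2 : ℝ) ^ (-|k| : ℤ) * (v i - v (i + k)) ^ 3 := by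
  refine (summable_abs_mul_add_pow_mul_zpow_neg_abs 3 |ρ| (2 * R) one_lt_two).of_norm_bounded
    fun k => ?_
  rw [Real.norm_eq_abs, abs_mul, abs_of_pos (zpow_pos two_pos _), abs_pow, mul_comm]
  gcongr
  exact abs_sub_apply_add_le hv i k

end NearLinear

theorem longRangeDelta_lipschitz_general (ρ R : ℝ)
    (u u' : ℤ → ℝ)
    (hu : ∀ i : ℤ, |u i - (i : ℝ) * ρ| ≤ R)
    (hu' : ∀ i : ℤ, |u' i - (i : ℝ) * ρ| ≤ R)
    (C : ℝ) (hd : ∀ i : ℤ, |u i - u' i| ≤ C) :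
    ∀ i : ℤ, |longRangeDelta u i - longRangeDelta u' i| ≤
      (∑' k : ℤ, 6 * ((|k| : ℝ) * |ρ| + 2 * R) ^ 2 * (2 : ℝ) ^ (-|k| : ℤ)) * C := by
  intro i
  have hterm : ∀ k : ℤ, ‖(2 : ℝ) ^ (-|k| : ℤ) * (u i - u (i + k)) ^ 3 -
      (2 : ℝ) ^ (-|k| : ℤ) * (u' i - u' (i + k)) ^ 3‖ ≤
        6 * ((|k| : ℝ) * |ρ| + 2 * R) ^ 2 * (2 : ℝ) ^ (-|k| : ℤ) * C := by
    intro k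
    have hincr : |(u i - u (i + k)) - (u' i - u' (i + k))| ≤ 2 * C := by
      rw [sub_sub_sub_comm, two_mul]
      exact (abs_sub _ _).trans (add_le_add (hd i) (hd (i + k)))
    have hcube := abs_pow_three_sub_pow_three_le
      (abs_sub_apply_add_le hu i k) (abs_sub_apply_add_le hu' i k)
    rw [Real.norm_eq_abs, ← mul_sub, abs_mul, abs_of_pos (zpow_pos two_pos _)]
    calc _ ≤ (2 : ℝ) ^ (-|k| : ℤ) * (3 * ((|k| : ℝ) * |ρ| + 2 * R) ^ 2 * (2 * C)) := by
          gcongr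
          exact hcube.trans (by gcongr)
      _ = _ := by ring
  have hbound : Summable fun k : ℤ =>
      6 * ((|k| : ℝ) * |ρ| + 2 * R) ^ 2 * (2 : ℝ) ^ (-|k| : ℤ) * C := by
    simpa only [mul_assoc] using
      ((summable_abs_mul_add_pow_mul_zpow_neg_abs 2 |ρ| (2 * R) one_lt_two).mul_left 6).mul_right C
  rw [longRangeDelta, longRangeDelta, ← (summable_longRangeDelta hu i).tsum_sub
    (summable_longRangeDelta hu' i), ← tsum_mul_right]
  exact tsum_of_norm_bounded hbound.hasSum hterm

/-- The long-range cubic interaction operator is Lipschitz on the ball of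
radius `R` around the linear configuration of slope `ρ`, with Lipschitz
constant `∑_k 6(|k||ρ|+2R)² 2^{-|k|}` for the sup-metric. -/
theorem longRangeDelta_lipschitz (ρ R : ℝ) (hR : 0 < R)
    (u u' : ℤ → ℝ)
    (hu : ∀ i : ℤ, |u i - (i : ℝ) * ρ| ≤ R)
    (hu' : ∀ i : ℤ, |u' i - (i : ℝ) * ρ| ≤ R)
    (C : ℝ) (hC : 0 ≤ C) (hd : ∀ i : ℤ, |u i - u' i| ≤ C) :
    ∀ i : ℤ, |longRangeDelta u i - longRangeDelta u' i| ≤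
      (∑' k : ℤ, 6 * ((|k| : ℝ) * |ρ| + 2 * R) ^ 2 * (2 : ℝ) ^ (-|k| : ℤ)) * C :=
  longRangeDelta_lipschitz_general ρ R u u' hu hu' C hd
end

section
/- Let f : ℝ^d → ℝ be C² with at least one nondegenerate critical point, and suppose the set of periods of f contains a lattice Γ in ℝ^d. Then ∇f satisfies the Aubry criterion: there exist a set O ⊆ ℝ^d, and constants R, r, m > 0 such that every ball of radius R contains a point of O, ∇f vanishes on O, and for every z ∈ O and x, y ∈ B̄_r(z), ‖∇f(x) − ∇f(y)‖ ≥ m‖x − y‖. -/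
/-!
Periods of `f` are periods of `∇f`, so the lattice translates of a nondegenerate critical point
`z₀` are again zeros of `∇f`; rounding coordinates in the basis shows that they form a net.
Since `∇f` is `C¹` with invertible derivative at `z₀`, the inverse function theorem gives a lower
Lipschitz bound for `∇f` on a small ball around `z₀`, and periodicity transports it to the ball
of the same radius around every translate.
-/

open Metric

theorem Function.Periodic.gradient {𝕜 F : Type*} [RCLike 𝕜] [NormedAddCommGroup F]
    [InnerProductSpace 𝕜 F] [CompleteSpace F] {f : F → 𝕜} {t : F} (h : Function.Periodic f t) :
    Function.Periodic (gradient f) t := by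
  intro x
  rw [_root_.gradient, _root_.gradient, ← fderiv_comp_add_right, h.funext]

theorem ContDiff.gradient {F : Type*} [NormedAddCommGroup F] [InnerProductSpace ℝ F]
    [CompleteSpace F] {f : F → ℝ} {m n : WithTop ℕ∞} (hf : ContDiff ℝ n f) (hmn : m + 1 ≤ n) :
    ContDiff ℝ m (gradient f) :=
  (InnerProductSpace.toDual ℝ F).symm.toContinuousLinearEquiv.contDiff.comp
    (hf.fderiv_right hmn)

theorem HasStrictFDerivAt.exists_mul_norm_sub_le_norm_sub_on_closedBall {𝕜 E F : Type*}
    [NontriviallyNormedField 𝕜] [NormedAddCommGroup E] [NormedSpace 𝕜 E]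
    [NormedAddCommGroup F] [NormedSpace 𝕜 F] {f : E → F} {f' : E ≃L[𝕜] F} {a : E}
    (hf : HasStrictFDerivAt f (f' : E →L[𝕜] F) a) :
    ∃ r > 0, ∃ m > 0, ∀ x ∈ closedBall a r, ∀ y ∈ closedBall a r,
      m * ‖x - y‖ ≤ ‖f x - f y‖ := by
  obtain ⟨s, has, hs, happrox⟩ := hf.approximates_deriv_on_open_nhds
  obtain ⟨r, hr, hrs⟩ := nhds_basis_closedBall.mem_iff.1 (hs.mem_nhds has)
  obtain ⟨K, hK⟩ : ∃ K, AntilipschitzWith K (s.domRestrict f) :=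
    ⟨_, happrox.antilipschitz <| f'.subsingleton_or_nnnorm_symm_pos.imp id
      fun hpos => NNReal.half_lt_self (inv_ne_zero hpos.ne')⟩
  refine ⟨r, hr, ((K : ℝ) + 1)⁻¹, by positivity, fun x hx y hy => ?_⟩
  have hxy := hK.le_mul_dist ⟨x, hrs hx⟩ ⟨y, hrs hy⟩
  simp only [Subtype.dist_eq, dist_eq_norm] at hxy
  change ‖x - y‖ ≤ K * ‖f x - f y‖ at hxy
  rw [inv_mul_le_iff₀ (by positivity)]
  nlinarith [norm_nonneg (f x - f y)]

theorem Module.Basis.exists_norm_sub_sum_intCast_smul_le {K E ι : Type*} [NormedField K]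
    [LinearOrder K] [IsStrictOrderedRing K] [FloorRing K] [HasSolidNorm K] [Fintype ι]
    [NormedAddCommGroup E] [NormedSpace K E] (b : Module.Basis ι K E) (x : E) :
    ∃ c : ι → ℤ, ‖x - ∑ i, (c i : K) • b i‖ ≤ ∑ i, ‖b i‖ :=
  ⟨fun i => ⌊b.repr x i⌋, by
    simpa [ZSpan.fract_apply, ZSpan.floor, Int.cast_smul_eq_zsmul] using ZSpan.norm_fract_le b x⟩

/-- A C² function whose period group contains a lattice and which has a
nondegenerate critical point has a gradient satisfying the Aubry criterion. -/
theorem periodic_gradient_satisfies_aubry {d : ℕ}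
    (f : EuclideanSpace ℝ (Fin d) → ℝ) (hf : ContDiff ℝ 2 f)
    (B : Module.Basis (Fin d) ℝ (EuclideanSpace ℝ (Fin d)))
    (hper : ∀ (c : Fin d → ℤ) (x : EuclideanSpace ℝ (Fin d)),
      f (x + ∑ i, (c i : ℝ) • B i) = f x)
    (hcrit : ∃ z : EuclideanSpace ℝ (Fin d), gradient f z = 0 ∧
      LinearMap.det
        (fderiv ℝ (gradient f) z :
          EuclideanSpace ℝ (Fin d) →ₗ[ℝ] EuclideanSpace ℝ (Fin d)) ≠ 0) :
    ∃ (O : Set (EuclideanSpace ℝ (Fin d))) (R r m : ℝ),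
      0 < R ∧ 0 < r ∧ 0 < m ∧
      (∀ x : EuclideanSpace ℝ (Fin d), ∃ z ∈ O, ‖x - z‖ ≤ R) ∧
      (∀ z ∈ O, gradient f z = 0) ∧
      (∀ z ∈ O, ∀ x ∈ closedBall z r, ∀ y ∈ closedBall z r,
        m * ‖x - y‖ ≤ ‖gradient f x - gradient f y‖) := by
  obtain ⟨z₀, hz₀, hdet⟩ := hcrit
  set t : (Fin d → ℤ) → EuclideanSpace ℝ (Fin d) := fun c => ∑ i, (c i : ℝ) • B i
  have hgper : ∀ c, Function.Periodic (gradient f) (t c) := fun c =>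
    Function.Periodic.gradient (hper c)
  have hg : ContDiff ℝ 1 (gradient f) := hf.gradient le_rfl
  let A := (LinearMap.equivOfDetNeZero _ hdet).toContinuousLinearEquiv
  have hA : HasStrictFDerivAt (gradient f) (A : _ →L[ℝ] _) z₀ :=
    hg.contDiffAt.hasStrictFDerivAt one_ne_zero
  obtain ⟨r, hr, m, hm, hinj⟩ := hA.exists_mul_norm_sub_le_norm_sub_on_closedBall
  refine ⟨Set.range fun c => z₀ + t c, 1 + ∑ i, ‖B i‖, r, m, by positivity, hr, hm, ?_, ?_, ?_⟩
  · intro x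
    obtain ⟨c, hc⟩ := B.exists_norm_sub_sum_intCast_smul_le (x - z₀)
    exact ⟨z₀ + t c, ⟨c, rfl⟩, by rw [← sub_sub]; linarith⟩
  · rintro _ ⟨c, rfl⟩
    exact (hgper c z₀).trans hz₀
  · rintro _ ⟨c, rfl⟩ x hx y hy
    have hmem : ∀ w ∈ closedBall (z₀ + t c) r, w - t c ∈ closedBall z₀ r := fun w hw => by
      rwa [mem_closedBall, ← dist_sub_right _ _ (t c), add_sub_cancel_right] at hw
    simpa only [sub_sub_sub_cancel_right, (hgper c).sub_eq] using
      hinj _ (hmem x hx) _ (hmem y hy)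
end

section
/- Let f : ℝ → ℝ be an almost-periodic function of class C² (for every ε > 0 there is a relatively dense set Λ_ε ⊆ ℝ with ‖f(·+x) − f‖_{C²(ℝ)} < ε for all x ∈ Λ_ε) that has a nondegenerate critical point. Then the set of critical points of f with second derivative bounded below in absolute value by some fixed m > 0 is relatively dense in ℝ: there exist R, m > 0 and a set O ⊆ ℝ such that every interval of length 2R contains a point of O, f'(z) = 0 for z ∈ O, and |f''(x)| ≥ m for all x within distance r of O for some r > 0. -/
open Set

/-!
Write `g = f'` and `c = f''(z₀) ≠ 0`. By continuity, `|g' - c| ≤ |c|/2` on `[z₀ - 2δ, z₀ + 2δ]`,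
so by the mean value theorem `g` changes sign on `[z₀ - δ, z₀ + δ]` with `|g(z₀ ± δ)| ≥ |c|δ/2`.
For an almost period `t` with `C¹`-error `ε ≤ min (|c|δ/2) (|c|/4)`, the translate `g(· + t)`
still changes sign there, so `g` vanishes at some `z` with `|z - (z₀ + t)| ≤ δ`. On
`[z - δ, z + δ]` the derivative `g'` is within `ε` of `g'(· - t)`, which is at least `|c|/2` in
absolute value, so `|g'| ≥ |c|/4` there.
-/

lemma mul_pos_of_abs_sub_lt_abs {u c : ℝ} (h : |u - c| < |c|) : 0 < u * c := by
  have := sq_lt_sq.mpr h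
  nlinarith [sq_nonneg u]

lemma exists_zero_of_abs_sub_lt_abs {g h : ℝ → ℝ} {a b : ℝ} (hab : a ≤ b)
    (hh : ContinuousOn h (Icc a b)) (hg : g a * g b < 0)
    (ha : |h a - g a| < |g a|) (hb : |h b - g b| < |g b|) : ∃ z ∈ Icc a b, h z = 0 := by
  have hsign : h a * h b < 0 := by
    have := mul_pos (mul_pos_of_abs_sub_lt_abs ha) (mul_pos_of_abs_sub_lt_abs hb)
    nlinarith
  have hzero : (0 : ℝ) ∈ uIcc (h a) (h b) := by
    rcases mul_neg_iff.mp hsign with ⟨ha', hb'⟩ | ⟨ha', hb'⟩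
    · exact mem_uIcc_of_ge hb'.le ha'.le
    · exact mem_uIcc_of_le ha'.le hb'.le
  rw [← uIcc_of_le hab] at hh ⊢
  exact intermediate_value_uIcc hh hzero

lemma sq_div_two_mul_sub_le_of_abs_deriv_sub_le {g : ℝ → ℝ} (hg : Differentiable ℝ g)
    {a b c : ℝ} (hab : a < b) (hderiv : ∀ x ∈ Ioo a b, |deriv g x - c| ≤ |c| / 2) :
    c ^ 2 / 2 * (b - a) ≤ (g b - g a) * c := by
  obtain ⟨ξ, hξ, hslope⟩ :=
    exists_deriv_eq_slope g hab hg.continuous.continuousOn hg.differentiableOn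
  have hξc : c ^ 2 / 2 ≤ deriv g ξ * c := by
    have hprod : |(deriv g ξ - c) * c| ≤ |c| / 2 * |c| := by
      rw [abs_mul]
      exact mul_le_mul_of_nonneg_right (hderiv ξ hξ) (abs_nonneg c)
    nlinarith [neg_abs_le ((deriv g ξ - c) * c), sq_abs c]
  rw [eq_div_iff (sub_pos.mpr hab).ne'] at hslope
  rw [← hslope]
  nlinarith [mul_le_mul_of_nonneg_right hξc (sub_pos.mpr hab).le]

lemma sign_change_of_abs_deriv_sub_le {g : ℝ → ℝ} (hg : Differentiable ℝ g) {z₀ δ c : ℝ}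
    (hz₀ : g z₀ = 0) (hδ : 0 < δ) (hc : c ≠ 0)
    (hderiv : ∀ x ∈ Icc (z₀ - δ) (z₀ + δ), |deriv g x - c| ≤ |c| / 2) :
    g (z₀ - δ) * g (z₀ + δ) < 0 ∧ |c| * δ / 2 ≤ |g (z₀ - δ)| ∧ |c| * δ / 2 ≤ |g (z₀ + δ)| := by
  have hleft := sq_div_two_mul_sub_le_of_abs_deriv_sub_le hg (a := z₀ - δ) (b := z₀)
    (by linarith) fun x hx => hderiv x ⟨by linarith [hx.1], by linarith [hx.2]⟩
  have hright := sq_div_two_mul_sub_le_of_abs_deriv_sub_le hg (a := z₀) (b := z₀ + δ)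
    (by linarith) fun x hx => hderiv x ⟨by linarith [hx.1], by linarith [hx.2]⟩
  rw [hz₀] at hleft hright
  have hc2 : 0 < c ^ 2 := by positivity
  have hcabs : 0 < |c| := abs_pos.mpr hc
  refine ⟨?_, ?_, ?_⟩
  · have : g (z₀ - δ) * c * (g (z₀ + δ) * c) < 0 := by
      apply mul_neg_of_neg_of_pos <;> nlinarith
    nlinarith
  · refine le_of_mul_le_mul_right ?_ hcabs
    nlinarith [neg_abs_le (g (z₀ - δ) * c), abs_mul (g (z₀ - δ)) c, sq_abs c]
  · refine le_of_mul_le_mul_right ?_ hcabs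
    nlinarith [le_abs_self (g (z₀ + δ) * c), abs_mul (g (z₀ + δ)) c, sq_abs c]

lemma exists_zero_near_translate_of_sign_change {g : ℝ → ℝ} (hg : Continuous g) {z₀ δ η t : ℝ}
    (hδ : 0 < δ) (hsign : g (z₀ - δ) * g (z₀ + δ) < 0)
    (hleft : η ≤ |g (z₀ - δ)|) (hright : η ≤ |g (z₀ + δ)|)
    (ht : ∀ x, |g (x + t) - g x| < η) : ∃ z, g z = 0 ∧ |z - (z₀ + t)| ≤ δ := by
  obtain ⟨y, hy, hzero⟩ := exists_zero_of_abs_sub_lt_abs (h := fun x => g (x + t))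
    (by linarith) (by fun_prop) hsign ((ht _).trans_le hleft) ((ht _).trans_le hright)
  refine ⟨y + t, hzero, abs_le.mpr ⟨?_, ?_⟩⟩ <;> linarith [hy.1, hy.2]

theorem exists_relativelyDense_nondegenerate_zeros {g : ℝ → ℝ} (hg : Differentiable ℝ g)
    (hap : ∀ ε > (0 : ℝ), ∃ Λ : Set ℝ, (∃ L > (0 : ℝ), ∀ x : ℝ, ∃ t ∈ Λ, |x - t| ≤ L) ∧
      ∀ t ∈ Λ, ∀ x : ℝ, |g (x + t) - g x| < ε ∧ |deriv g (x + t) - deriv g x| < ε)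
    {z₀ : ℝ} (hz₀ : g z₀ = 0) (hc : deriv g z₀ ≠ 0) (hcont : ContinuousAt (deriv g) z₀) :
    ∃ (O : Set ℝ) (R m r : ℝ), 0 < R ∧ 0 < m ∧ 0 < r ∧
      (∀ x : ℝ, ∃ z ∈ O, |x - z| ≤ R) ∧
      (∀ z ∈ O, g z = 0) ∧
      (∀ z ∈ O, ∀ x : ℝ, |x - z| ≤ r → m ≤ |deriv g x|) := by
  set c := deriv g z₀
  have hcabs : 0 < |c| := abs_pos.mpr hc
  obtain ⟨δ, hδ, hnear⟩ : ∃ δ > 0, ∀ x, |x - z₀| ≤ 2 * δ → |deriv g x - c| ≤ |c| / 2 := by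
    obtain ⟨ρ, hρ, hball⟩ := Metric.nhds_basis_closedBall.eventually_iff.mp
      (hcont.eventually (Metric.closedBall_mem_nhds c (by positivity : 0 < |c| / 2)))
    refine ⟨ρ / 2, by positivity, fun x hx => hball ?_⟩
    rw [Metric.mem_closedBall, Real.dist_eq]
    linarith
  obtain ⟨hsign, hleft, hright⟩ := sign_change_of_abs_deriv_sub_le hg hz₀ hδ hc fun x hx =>
    hnear x (abs_le.mpr ⟨by linarith [hx.1], by linarith [hx.2]⟩)
  set ε := min (|c| * δ / 2) (|c| / 4)
  obtain ⟨Λ, ⟨L, hL, hdense⟩, hΛ⟩ := hap ε (by positivity)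
  refine ⟨{z | g z = 0 ∧ ∃ t ∈ Λ, |z - (z₀ + t)| ≤ δ}, L + δ, |c| / 4, δ, by positivity,
    by positivity, hδ, fun x => ?_, fun z hz => hz.1, ?_⟩
  · obtain ⟨t, ht, hxt⟩ := hdense (x - z₀)
    obtain ⟨z, hz, hzt⟩ := exists_zero_near_translate_of_sign_change hg.continuous hδ hsign
      ((min_le_left _ _).trans hleft) ((min_le_left _ _).trans hright) fun x => (hΛ t ht x).1
    refine ⟨z, ⟨hz, t, ht, hzt⟩, ?_⟩
    rw [abs_le] at hxt hzt ⊢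
    constructor <;> linarith
  · rintro z ⟨-, t, ht, hzt⟩ x hxz
    have hshift := hnear (x - t) (by rw [abs_le] at hzt hxz ⊢; constructor <;> linarith)
    have htrans := (hΛ t ht (x - t)).2
    rw [sub_add_cancel] at htrans
    linarith [abs_sub_abs_le_abs_sub c (deriv g (x - t)), abs_sub_comm c (deriv g (x - t)),
      abs_sub_abs_le_abs_sub (deriv g (x - t)) (deriv g x),
      abs_sub_comm (deriv g x) (deriv g (x - t)),
      min_le_right (|c| * δ / 2) (|c| / 4)]

/-- For a C² almost-periodic function on ℝ with a nondegenerate critical point,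
the set of critical points with second derivative uniformly bounded away from
zero in a neighborhood is relatively dense. -/
theorem almost_periodic_critical_points_relatively_dense
    (f : ℝ → ℝ) (hf : ContDiff ℝ 2 f)
    (hap : ∀ ε > (0 : ℝ), ∃ Λ : Set ℝ,
      (∃ L > (0 : ℝ), ∀ x : ℝ, ∃ t ∈ Λ, |x - t| ≤ L) ∧
      ∀ t ∈ Λ, ∀ x : ℝ,
        |f (x + t) - f x| < ε ∧
        |deriv f (x + t) - deriv f x| < ε ∧
        |deriv (deriv f) (x + t) - deriv (deriv f) x| < ε)
    (hcrit : ∃ z : ℝ, deriv f z = 0 ∧ deriv (deriv f) z ≠ 0) :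
    ∃ (O : Set ℝ) (R m r : ℝ), 0 < R ∧ 0 < m ∧ 0 < r ∧
      (∀ x : ℝ, ∃ z ∈ O, |x - z| ≤ R) ∧
      (∀ z ∈ O, deriv f z = 0) ∧
      (∀ z ∈ O, ∀ x : ℝ, |x - z| ≤ r → m ≤ |deriv (deriv f) x|) := by
  obtain ⟨z₀, hz₀, hc⟩ := hcrit
  have hf' : ContDiff ℝ 1 (deriv f) := hf.deriv'
  refine exists_relativelyDense_nondegenerate_zeros (hf'.differentiable one_ne_zero)
    (fun ε hε => ?_) hz₀ hc (hf'.continuous_deriv le_rfl).continuousAt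
  obtain ⟨Λ, hdense, hΛ⟩ := hap ε hε
  exact ⟨Λ, hdense, fun t ht x => (hΛ t ht x).2⟩
end

section
/- Let A, B, C be d×d real matrices and ξ_{i−1}, ξ_i, ξ_{i+1} ∈ ℝ^d satisfy A(ξ_i − ξ_{i+1}) − B(ξ_{i−1} − ξ_i) + λ C ξ_i = 0. Suppose σ_max(A) ≤ K/4, σ_max(B) ≤ K/4, λσ_min(C) ≥ K(1 + R/r), and ‖ξ_{i−1}‖ ≤ α‖ξ_i‖ where α < 1 is the smaller root of x² − (2 + 4R/r)x + 1 = 0. Then ‖ξ_i‖ ≤ α‖ξ_{i+1}‖ and ‖(ξ_i, ξ_{i+1})‖ ≥ (1/α)‖(ξ_{i−1}, ξ_i)‖, where ‖(v,w)‖ = √(‖v‖² + ‖w‖²). -/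
/-! Taking norms in the equation and using the bounds on `A`, `B`, `C` gives the three-term
inequality `(2 + 4R/r)‖ξᵢ‖ ≤ ‖ξᵢ₋₁‖ + ‖ξᵢ₊₁‖` for the norms. Since `α + 1/α = 2 + 4R/r`,
multiplying it by `α` shows that `‖ξᵢ₋₁‖ ≤ α‖ξᵢ‖` forces `‖ξᵢ‖ ≤ α‖ξᵢ₊₁‖`; the estimate for
the pairs follows by adding the squares of the two cone inequalities. -/

theorem norm_le_of_three_term_eq {𝕜 E F : Type*} [NontriviallyNormedField 𝕜]
    [SeminormedAddCommGroup E] [NormedSpace 𝕜 E] [SeminormedAddCommGroup F] [NormedSpace 𝕜 F]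
    (A B : E →L[𝕜] F) (v : F) (x y z : E) (h : A (y - z) - B (x - y) + v = 0) :
    ‖v‖ ≤ ‖B‖ * (‖x‖ + ‖y‖) + ‖A‖ * (‖y‖ + ‖z‖) := by
  have hv : v = B (x - y) - A (y - z) := by
    rw [← sub_eq_zero, ← h]; abel
  calc ‖v‖ ≤ ‖B (x - y)‖ + ‖A (y - z)‖ := hv ▸ norm_sub_le _ _
    _ ≤ ‖B‖ * ‖x - y‖ + ‖A‖ * ‖y - z‖ := add_le_add (B.le_opNorm _) (A.le_opNorm _)
    _ ≤ ‖B‖ * (‖x‖ + ‖y‖) + ‖A‖ * (‖y‖ + ‖z‖) := by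
      gcongr <;> exact norm_sub_le _ _

theorem le_mul_of_three_term_le {α s a b c : ℝ} (hα : 0 ≤ α) (hroot : α ^ 2 - s * α + 1 = 0)
    (habc : s * b ≤ a + c) (hab : a ≤ α * b) : b ≤ α * c :=
  calc b = α * (s * b) - α * (α * b) := by linear_combination b * hroot
    _ ≤ α * (a + c) - α * a := by gcongr
    _ = α * c := by ring

theorem sqrt_sq_add_sq_le_mul_of_le_mul {α a b c : ℝ} (hα : 0 ≤ α) (ha : 0 ≤ a) (hb : 0 ≤ b)
    (hab : a ≤ α * b) (hbc : b ≤ α * c) :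
    √(a ^ 2 + b ^ 2) ≤ α * √(b ^ 2 + c ^ 2) := by
  rw [← Real.sqrt_sq hα, ← Real.sqrt_mul (sq_nonneg α)]
  gcongr
  calc a ^ 2 + b ^ 2 ≤ (α * b) ^ 2 + (α * c) ^ 2 := by gcongr
    _ = α ^ 2 * (b ^ 2 + c ^ 2) := by ring

/-- `σ_min(C) ≥ σ` is expressed as `σ‖v‖ ≤ ‖Cv‖` for all `v`, and `‖(v,w)‖` as
`√(‖v‖² + ‖w‖²)`. -/
theorem cone_expansion_estimate_general {d : ℕ}
    (A B C : EuclideanSpace ℝ (Fin d) →L[ℝ] EuclideanSpace ℝ (Fin d))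
    (K R r lam α : ℝ)
    (hK : 0 < K)
    (hA : ‖A‖ ≤ K / 4) (hB : ‖B‖ ≤ K / 4)
    (hC : ∀ v : EuclideanSpace ℝ (Fin d), K * (1 + R / r) * ‖v‖ ≤ lam * ‖C v‖)
    (hα0 : 0 < α)
    (hαroot : α ^ 2 - (2 + 4 * R / r) * α + 1 = 0)
    (ξp ξ ξn : EuclideanSpace ℝ (Fin d))
    (heq : A (ξ - ξn) - B (ξp - ξ) + lam • C ξ = 0)
    (hξp : ‖ξp‖ ≤ α * ‖ξ‖) :
    ‖ξ‖ ≤ α * ‖ξn‖ ∧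
      (1 / α) * Real.sqrt (‖ξp‖ ^ 2 + ‖ξ‖ ^ 2) ≤
        Real.sqrt (‖ξ‖ ^ 2 + ‖ξn‖ ^ 2) := by
  have hnorms : K * (1 + R / r) * ‖ξ‖ ≤ K / 4 * (‖ξp‖ + ‖ξ‖) + K / 4 * (‖ξ‖ + ‖ξn‖) :=
    calc K * (1 + R / r) * ‖ξ‖ ≤ lam * ‖C ξ‖ := hC ξ
      _ ≤ ‖lam • C ξ‖ := by rw [norm_smul]; gcongr; exact Real.le_norm_self lam
      _ ≤ ‖B‖ * (‖ξp‖ + ‖ξ‖) + ‖A‖ * (‖ξ‖ + ‖ξn‖) := norm_le_of_three_term_eq A B _ _ _ _ heq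
      _ ≤ K / 4 * (‖ξp‖ + ‖ξ‖) + K / 4 * (‖ξ‖ + ‖ξn‖) := by gcongr
  have hthree : (2 + 4 * R / r) * ‖ξ‖ ≤ ‖ξp‖ + ‖ξn‖ :=
    le_of_mul_le_mul_left (by linear_combination 4 * hnorms) hK
  have hcone : ‖ξ‖ ≤ α * ‖ξn‖ := le_mul_of_three_term_le hα0.le hαroot hthree hξp
  refine ⟨hcone, ?_⟩
  rw [one_div, inv_mul_le_iff₀ hα0]
  exact sqrt_sq_add_sq_le_mul_of_le_mul hα0.le (norm_nonneg _) (norm_nonneg _) hξp hcone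

/-- Cone-expansion estimate underlying the hyperbolicity of anti-integrable
equilibria. `σ_min(C) ≥ σ` is expressed as `σ‖v‖ ≤ ‖Cv‖` for all `v`, and
`‖(v,w)‖ = √(‖v‖² + ‖w‖²)`. -/
theorem cone_expansion_estimate {d : ℕ}
    (A B C : EuclideanSpace ℝ (Fin d) →L[ℝ] EuclideanSpace ℝ (Fin d))
    (K R r lam α : ℝ)
    (hK : 0 < K) (hR : 0 < R) (hr : 0 < r) (hlam : 0 < lam)
    (hA : ‖A‖ ≤ K / 4) (hB : ‖B‖ ≤ K / 4)
    (hC : ∀ v : EuclideanSpace ℝ (Fin d), K * (1 + R / r) * ‖v‖ ≤ lam * ‖C v‖)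
    (hα0 : 0 < α) (hα1 : α < 1)
    (hαroot : α ^ 2 - (2 + 4 * R / r) * α + 1 = 0)
    (ξp ξ ξn : EuclideanSpace ℝ (Fin d))
    (heq : A (ξ - ξn) - B (ξp - ξ) + lam • C ξ = 0)
    (hξp : ‖ξp‖ ≤ α * ‖ξ‖) :
    ‖ξ‖ ≤ α * ‖ξn‖ ∧
      (1 / α) * Real.sqrt (‖ξp‖ ^ 2 + ‖ξ‖ ^ 2) ≤
        Real.sqrt (‖ξ‖ ^ 2 + ‖ξn‖ ^ 2) :=
  cone_expansion_estimate_general A B C K R r lam α hK hA hB hC hα0 hαroot ξp ξ ξn heq hξp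
end
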